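/- ELBO for the greedy planner: let V and D be as below and fix x_0 ∈ V^L with no mask symbols. Define the deterministic greedy reference path by Y_0 = (m,...,m) and, for k = 0,...,L-1, j_k = argmax_{i : Y_k^i = m} Cat( x_0^i; D^i(Y_k) ) (assumed unique or resolved by a fixed tie-breaking rule), with Y_{k+1} obtained from Y_k by setting coordinate j_k to x_0^{j_k}. Let p^{greedy} be the distribution of planner-guided sampling with the greedy planner G(z,x) = δ( argmax_{j : x^j = m} Cat(z^j; D^j(x)) ). Then log p^{greedy}(x_0) ≥ Σ_{k=0}^{L-1} Σ_{i : Y_k^i = m} log Cat( x_0^i; D^i(Y_k) ). -/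

import Mathlib

/-!
Proof idea: the sampler reaches `x₀` along the greedy reference path `Y 0, …, Y L = x₀` with
probability at least the product of its one-step transition probabilities. At step `k`, every
draw `z` that agrees with `x₀` on the masked positions of `Y k` makes the greedy planner pick
`j k` (it only looks at masked coordinates), so the step `Y k → Y (k+1)` has probability at
least `∏_{i masked} D^i(Y k)(x₀ i)`. Taking logarithms gives the bound.
-/

open Finset

/-- One step of planner-guided sampling: from state `x`, sample `z ~ D(x)`
coordinatewise independently, sample a position `i ~ G(z, x)`, and replace the `i`-th
coordinate of `x` by `z i`. -/
noncomputable def stepKernel {V : Type*} [Fintype V] [DecidableEq V] {L : ℕ}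
    (D : (Fin L → V) → Fin L → V → ℝ)
    (G : (Fin L → V) → (Fin L → V) → Fin L → ℝ)
    (x w : Fin L → V) : ℝ :=
  ∑ z : Fin L → V, (∏ j, D x j (z j)) *
    ∑ i ∈ Finset.univ.filter (fun i : Fin L => Function.update x i (z i) = w), G z x i

/-- The distribution of the state after `k` steps of planner-guided sampling,
starting from the fully masked sequence; `sampleDist D G mask L` is `p^G`. -/
noncomputable def sampleDist {V : Type*} [Fintype V] [DecidableEq V] {L : ℕ}
    (D : (Fin L → V) → Fin L → V → ℝ)
    (G : (Fin L → V) → (Fin L → V) → Fin L → ℝ)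
    (mask : V) : ℕ → (Fin L → V) → ℝ
  | 0, w => if w = (fun _ => mask) then (1 : ℝ) else 0
  | k + 1, w => ∑ x : Fin L → V, sampleDist D G mask k x * stepKernel D G x w

theorem sum_piFinset_ite_singleton_prod {ι V : Type*} [Fintype ι] [DecidableEq ι]
    [Fintype V] (P : ι → V → ℝ) (hP : ∀ j, ∑ y, P j y = 1)
    (s : Finset ι) (c : ι → V) :
    ∑ z ∈ Fintype.piFinset (fun j => if j ∈ s then {c j} else univ), ∏ j, P j (z j)
      = ∏ j ∈ s, P j (c j) := by
  rw [← prod_univ_sum, ← Fintype.prod_ite_mem s]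
  refine prod_congr rfl fun j _ => ?_
  split_ifs <;> simp [hP]

section Sampling

variable {V : Type*} [Fintype V] [DecidableEq V] {L : ℕ}
  {D : (Fin L → V) → Fin L → V → ℝ} {G : (Fin L → V) → (Fin L → V) → Fin L → ℝ}

theorem stepKernel_nonneg (hD : ∀ x i y, 0 ≤ D x i y) (hG : ∀ z x i, 0 ≤ G z x i)
    (x w : Fin L → V) : 0 ≤ stepKernel D G x w :=
  sum_nonneg fun _ _ =>
    mul_nonneg (prod_nonneg fun _ _ => hD _ _ _) (sum_nonneg fun _ _ => hG _ _ _)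

theorem sampleDist_nonneg (hD : ∀ x i y, 0 ≤ D x i y) (hG : ∀ z x i, 0 ≤ G z x i)
    (mask : V) : ∀ k w, 0 ≤ sampleDist D G mask k w
  | 0, w => by unfold sampleDist; split_ifs <;> norm_num
  | k + 1, w => sum_nonneg fun x _ =>
      mul_nonneg (sampleDist_nonneg hD hG mask k x) (stepKernel_nonneg hD hG x w)

theorem sampleDist_mul_stepKernel_le_sampleDist_succ (hD : ∀ x i y, 0 ≤ D x i y)
    (hG : ∀ z x i, 0 ≤ G z x i) (mask : V) (k : ℕ) (x w : Fin L → V) :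
    sampleDist D G mask k x * stepKernel D G x w ≤ sampleDist D G mask (k + 1) w :=
  single_le_sum (f := fun x => sampleDist D G mask k x * stepKernel D G x w)
    (fun x _ => mul_nonneg (sampleDist_nonneg hD hG mask k x) (stepKernel_nonneg hD hG x w))
    (mem_univ x)

theorem prod_le_sampleDist_of_path (hD : ∀ x i y, 0 ≤ D x i y) (hG : ∀ z x i, 0 ≤ G z x i)
    {mask : V} {Y : ℕ → Fin L → V} (hY0 : Y 0 = fun _ => mask) {q : ℕ → ℝ} {n : ℕ}
    (hq0 : ∀ k < n, 0 ≤ q k) (hq : ∀ k < n, q k ≤ stepKernel D G (Y k) (Y (k + 1))) :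
    ∏ k ∈ range n, q k ≤ sampleDist D G mask n (Y n) := by
  induction n with
  | zero => simp [sampleDist, hY0]
  | succ n ih =>
    have ih' := ih (fun k hk => hq0 k (by omega)) (fun k hk => hq k (by omega))
    rw [prod_range_succ]
    calc (∏ k ∈ range n, q k) * q n
        ≤ sampleDist D G mask n (Y n) * stepKernel D G (Y n) (Y (n + 1)) :=
          mul_le_mul ih' (hq n n.lt_succ_self) (hq0 n n.lt_succ_self)
            ((prod_nonneg fun k hk => hq0 k (by simp at hk; omega)).trans ih')
      _ ≤ sampleDist D G mask (n + 1) (Y (n + 1)) :=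
          sampleDist_mul_stepKernel_le_sampleDist_succ hD hG mask n _ _

theorem prod_masked_le_stepKernel (hD0 : ∀ x i y, 0 ≤ D x i y) (hD1 : ∀ x i, ∑ y, D x i y = 1)
    (hG : ∀ z x i, 0 ≤ G z x i) {mask : V} {x c : Fin L → V} {j : Fin L}
    (hGdep : ∀ z, (∀ i, x i = mask → z i = c i) → G z x = G c x)
    (hxj : x j = mask) (hj : G c x j = 1) :
    ∏ i ∈ univ.filter (fun i => x i = mask), D x i (c i)
      ≤ stepKernel D G x (Function.update x j (c j)) := by
  set cyl := Fintype.piFinset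
    (fun i => if i ∈ univ.filter (fun i => x i = mask) then {c i} else univ)
  have one_le_select : ∀ z ∈ cyl,
      1 ≤ ∑ i ∈ univ.filter (fun i => Function.update x i (z i) = Function.update x j (c j)),
        G z x i := by
    intro z hz
    have hzc : ∀ i, x i = mask → z i = c i := fun i hi => by
      simpa [hi] using Fintype.mem_piFinset.mp hz i
    have hjmem : j ∈ univ.filter
        (fun i => Function.update x i (z i) = Function.update x j (c j)) := by
      simp [hzc j hxj]
    calc (1 : ℝ) = G z x j := by rw [hGdep z hzc, hj]
      _ ≤ _ := single_le_sum (f := G z x) (fun i _ => hG z x i) hjmem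
  calc ∏ i ∈ univ.filter (fun i => x i = mask), D x i (c i)
      = ∑ z ∈ cyl, ∏ i, D x i (z i) := (sum_piFinset_ite_singleton_prod _ (hD1 x) _ c).symm
    _ ≤ ∑ z ∈ cyl, (∏ i, D x i (z i)) *
          ∑ i ∈ univ.filter (fun i => Function.update x i (z i) = Function.update x j (c j)),
            G z x i :=
        sum_le_sum fun z hz =>
          le_mul_of_one_le_right (prod_nonneg fun _ _ => hD0 _ _ _) (one_le_select z hz)
    _ ≤ stepKernel D G x (Function.update x j (c j)) :=
        sum_le_sum_of_subset_of_nonneg (subset_univ _) fun z _ _ =>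
          mul_nonneg (prod_nonneg fun _ _ => hD0 _ _ _) (sum_nonneg fun _ _ => hG _ _ _)

end Sampling

section UnmaskingPath

variable {ι V : Type*} [DecidableEq ι] {mask : V} {x0 : ι → V} {jSel : ℕ → ι} {Y : ℕ → ι → V}

theorem unmaskingPath_eq_of_ne_mask (hY0 : Y 0 = fun _ => mask)
    (hYsucc : ∀ k, Y (k + 1) = Function.update (Y k) (jSel k) (x0 (jSel k))) :
    ∀ k i, Y k i ≠ mask → Y k i = x0 i
  | 0, i, h => absurd (congrFun hY0 i) h
  | k + 1, i, h => by
    rw [hYsucc k] at h ⊢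
    by_cases hi : i = jSel k
    · subst hi; exact Function.update_self ..
    · rw [Function.update_of_ne hi] at h ⊢
      exact unmaskingPath_eq_of_ne_mask hY0 hYsucc k i h

variable [Fintype ι] [DecidableEq V]

theorem unmaskingPath_filter_mask_succ (hx0 : ∀ i, x0 i ≠ mask)
    (hYsucc : ∀ k, Y (k + 1) = Function.update (Y k) (jSel k) (x0 (jSel k))) (k : ℕ) :
    univ.filter (fun i => Y (k + 1) i = mask)
      = (univ.filter fun i => Y k i = mask).erase (jSel k) := by
  ext i
  by_cases hi : i = jSel k
  · subst hi; simp [hYsucc k, hx0]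
  · simp [hYsucc k, hi]

theorem unmaskingPath_card_filter_mask (hx0 : ∀ i, x0 i ≠ mask) (hY0 : Y 0 = fun _ => mask)
    (hYsucc : ∀ k, Y (k + 1) = Function.update (Y k) (jSel k) (x0 (jSel k)))
    (hjmask : ∀ k < Fintype.card ι, Y k (jSel k) = mask) :
    ∀ k ≤ Fintype.card ι, #(univ.filter fun i => Y k i = mask) = Fintype.card ι - k
  | 0, _ => by simp [hY0]
  | k + 1, hk => by
    rw [unmaskingPath_filter_mask_succ hx0 hYsucc, card_erase_of_mem (by simpa using hjmask k hk),
      unmaskingPath_card_filter_mask hx0 hY0 hYsucc hjmask k (by omega)]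
    omega

theorem unmaskingPath_at_card (hx0 : ∀ i, x0 i ≠ mask) (hY0 : Y 0 = fun _ => mask)
    (hYsucc : ∀ k, Y (k + 1) = Function.update (Y k) (jSel k) (x0 (jSel k)))
    (hjmask : ∀ k < Fintype.card ι, Y k (jSel k) = mask) :
    Y (Fintype.card ι) = x0 := by
  have hempty := unmaskingPath_card_filter_mask hx0 hY0 hYsucc hjmask _ le_rfl
  rw [Nat.sub_self, card_eq_zero, filter_eq_empty_iff] at hempty
  exact funext fun i => unmaskingPath_eq_of_ne_mask hY0 hYsucc _ i (hempty (mem_univ i))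

end UnmaskingPath

theorem greedy_planner_elbo_general
    {V : Type*} [Fintype V] [DecidableEq V] {L : ℕ}
    (mask : V)
    (D : (Fin L → V) → Fin L → V → ℝ)
    (G : (Fin L → V) → (Fin L → V) → Fin L → ℝ)
    (hD0 : ∀ x i y, 0 ≤ D x i y) (hD1 : ∀ x i, ∑ y, D x i y = 1)
    (hG01 : ∀ z x i, G z x i = 0 ∨ G z x i = 1)
    (hGsupp : ∀ z x i, x i ≠ mask → G z x i = 0)
    (hGdep : ∀ z z' x, (∀ j, x j = mask → z j = z' j) → G z x = G z' x)
    (x0 : Fin L → V) (hx0 : ∀ i, x0 i ≠ mask)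
    (jSel : ℕ → Fin L) (Y : ℕ → Fin L → V)
    (hY0 : Y 0 = fun _ => mask)
    (hjsel : ∀ k, k < L → G x0 (Y k) (jSel k) = 1)
    (hYsucc : ∀ k, Y (k + 1) = Function.update (Y k) (jSel k) (x0 (jSel k)))
    (hpos : ∀ k, k < L → ∀ i, Y k i = mask → 0 < D (Y k) i (x0 i)) :
    Real.log (sampleDist D G mask L x0)
      ≥ ∑ k ∈ Finset.range L,
          ∑ i ∈ Finset.univ.filter (fun i : Fin L => Y k i = mask),
            Real.log (D (Y k) i (x0 i)) := by
  have hG : ∀ z x i, 0 ≤ G z x i := fun z x i => by rcases hG01 z x i with h | h <;> simp [h]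
  have hjmask : ∀ k < L, Y k (jSel k) = mask := fun k hk => by
    by_contra h
    simpa [hjsel k hk] using hGsupp x0 (Y k) (jSel k) h
  have hYL : Y L = x0 := by
    simpa using unmaskingPath_at_card hx0 hY0 hYsucc (by simpa using hjmask)
  set q : ℕ → ℝ := fun k => ∏ i ∈ univ.filter (fun i => Y k i = mask), D (Y k) i (x0 i)
  have hq_pos : ∀ k ∈ range L, 0 < q k := fun k hk =>
    prod_pos fun i hi => hpos k (mem_range.mp hk) i (mem_filter.mp hi).2
  have hq_le : ∏ k ∈ range L, q k ≤ sampleDist D G mask L x0 :=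
    hYL ▸ prod_le_sampleDist_of_path hD0 hG hY0 (fun k hk => (hq_pos k (mem_range.mpr hk)).le)
      fun k hk => hYsucc k ▸ prod_masked_le_stepKernel hD0 hD1 hG
        (fun z hz => hGdep z x0 (Y k) hz) (hjmask k hk) (hjsel k hk)
  calc ∑ k ∈ range L, ∑ i ∈ univ.filter (fun i => Y k i = mask), Real.log (D (Y k) i (x0 i))
      = Real.log (∏ k ∈ range L, q k) := by
        rw [Real.log_prod fun k hk => (hq_pos k hk).ne']
        refine sum_congr rfl fun k hk => (Real.log_prod fun i hi => ?_).symm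
        exact (hpos k (mem_range.mp hk) i (mem_filter.mp hi).2).ne'
    _ ≤ Real.log (sampleDist D G mask L x0) := Real.log_le_log (prod_pos hq_pos) hq_le

/-- **ELBO for the greedy planner.**  Let `G` be the greedy planner for the denoiser
`D`: a deterministic planner supported on masked positions which always selects a
masked position of maximal denoiser confidence (the argmax being resolved by a fixed
tie-breaking rule, so that `G` depends only on the values of `z` at masked positions).
Let `Y` be the deterministic greedy reference path: `Y 0` is fully masked and
`Y (k+1)` is obtained from `Y k` by setting coordinate `j k` to `x₀ (j k)`, where
`j k` is the masked position of `Y k` maximizing `Cat(x₀^i; D^i(Y k))` (the position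
selected by the greedy planner on input `(x₀, Y k)`).  Then for a mask-free `x₀`,
`log p^{greedy}(x₀) ≥ Σ_{k=0}^{L-1} Σ_{i : (Y k)^i = m} log Cat(x₀^i; D^i(Y k))`.
The positivity hypothesis `hpos` ensures no `−∞` terms occur, so the extended-real
inequality can be stated over `ℝ`. -/
theorem greedy_planner_elbo
    {V : Type*} [Fintype V] [DecidableEq V] {L : ℕ}
    (mask : V)
    (D : (Fin L → V) → Fin L → V → ℝ)
    (G : (Fin L → V) → (Fin L → V) → Fin L → ℝ)
    (hD0 : ∀ x i y, 0 ≤ D x i y) (hD1 : ∀ x i, ∑ y, D x i y = 1)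
    (hG01 : ∀ z x i, G z x i = 0 ∨ G z x i = 1)
    (hGsupp : ∀ z x i, x i ≠ mask → G z x i = 0)
    (hGsum : ∀ z x, (∃ i, x i = mask) → ∑ i, G z x i = 1)
    (hGmax : ∀ z x i, G z x i = 1 → ∀ j, x j = mask → D x j (z j) ≤ D x i (z i))
    (hGdep : ∀ z z' x, (∀ j, x j = mask → z j = z' j) → G z x = G z' x)
    (x0 : Fin L → V) (hx0 : ∀ i, x0 i ≠ mask)
    (jSel : ℕ → Fin L) (Y : ℕ → Fin L → V)
    (hY0 : Y 0 = fun _ => mask)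
    (hjsel : ∀ k, k < L → G x0 (Y k) (jSel k) = 1)
    (hYsucc : ∀ k, Y (k + 1) = Function.update (Y k) (jSel k) (x0 (jSel k)))
    (hpos : ∀ k, k < L → ∀ i, Y k i = mask → 0 < D (Y k) i (x0 i)) :
    Real.log (sampleDist D G mask L x0)
      ≥ ∑ k ∈ Finset.range L,
          ∑ i ∈ Finset.univ.filter (fun i : Fin L => Y k i = mask),
            Real.log (D (Y k) i (x0 i)) :=
  greedy_planner_elbo_general mask D G hD0 hD1 hG01 hGsupp hGdep x0 hx0 jSel Y hY0 hjsel hYsucc hpos
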